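/- arXiv:2303.10617 — 2 statements merged into one kernel-verified Lean document; each statement's English description precedes it below -/
import Mathlib

section
/- (Point-count version of the main recursion.) Let K be a finite field with q elements and fix integers d, r ≥ 1 and n ≥ 0. Let N_k denote the number of GL_k(K)-orbits on the set U^k_{r,d}(K) of full-span tuples on K^k. Then N_n · |GL_n(K)| = q^{d n² + r n} − Σ_{k=0}^{n−1} N_k · |GL_k(K)| · c_q(k,n) · q^{d·n·(n−k)}, where c_q(k,n) is the number of k-dimensional K-subspaces of K^n. -/
/-- `tupleSpan K T v` is the `K`-linear span of all vectors of the form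
`T i₁ ∘ ⋯ ∘ T iₘ (v j)`, where `m ≥ 0` and `1 ≤ j ≤ r`. -/
def tupleSpan (K : Type*) {V : Type*} [Field K] [AddCommGroup V] [Module K V]
    {d r : ℕ} (T : Fin d → Module.End K V) (v : Fin r → V) : Submodule K V :=
  Submodule.span K {w | ∃ (l : List (Fin d)) (j : Fin r), w = ((l.map T).prod) (v j)}

/-- The action of `GL_k(K)` on tuples: simultaneous conjugation on the endomorphisms and the
natural action on the vectors. -/
def glAct {K : Type*} [Field K] {d r k : ℕ} (g : (Fin k → K) ≃ₗ[K] (Fin k → K))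
    (x : (Fin d → Module.End K (Fin k → K)) × (Fin r → (Fin k → K))) :
    (Fin d → Module.End K (Fin k → K)) × (Fin r → (Fin k → K)) :=
  (fun i => g.toLinearMap ∘ₗ x.1 i ∘ₗ g.symm.toLinearMap, fun j => g (x.2 j))

/-- `N_k`: the number of `GL_k(K)`-orbits on the set of full-span tuples on `K^k`. -/
noncomputable def numOrbits (K : Type*) [Field K] (d r k : ℕ) : ℕ :=
  Nat.card (Quot (fun x y : {x : (Fin d → Module.End K (Fin k → K)) ×
      (Fin r → (Fin k → K)) // tupleSpan K x.1 x.2 = ⊤} =>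
    ∃ g : (Fin k → K) ≃ₗ[K] (Fin k → K), glAct g x.1 = y.1))

/-- `|GL_k(K)|`. -/
noncomputable def cardGL (K : Type*) [Field K] (k : ℕ) : ℕ :=
  Nat.card ((Fin k → K) ≃ₗ[K] (Fin k → K))

/-!
The action of `GL(V)` on tuples whose span is all of `V` is free: an element fixing such a tuple
fixes every `v j` and commutes with every `T i`, hence is the identity on their span. So these
tuples number `N_k · |GL_k|` when `dim V = k`. The span of an arbitrary tuple on `K^n` is an
invariant subspace `W` containing the `v j`; fixing a complement `C` of `W`, the tuples with span
exactly `W` correspond to full-span tuples on `W` together with `d` arbitrary maps `C → K^n`.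
Sorting all `q^(dn² + rn)` tuples by their span and isolating the term `W = K^n` gives the
recursion.
-/

open Module

section TupleSpan

variable {K V V' : Type*} [Field K] [AddCommGroup V] [Module K V] [AddCommGroup V'] [Module K V']
  {d r : ℕ}

theorem tupleSpan_le_of_mapsTo {W : Submodule K V} {T : Fin d → Module.End K V} {v : Fin r → V}
    (hT : ∀ i, ∀ x ∈ W, T i x ∈ W) (hv : ∀ j, v j ∈ W) : tupleSpan K T v ≤ W := by
  refine Submodule.span_le.2 ?_
  rintro _ ⟨l, j, rfl⟩
  induction l with
  | nil => simpa using hv j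
  | cons i l ih => simpa using hT i _ ih

theorem mem_of_tupleSpan_eq {W : Submodule K V} {T : Fin d → Module.End K V} {v : Fin r → V}
    (hW : tupleSpan K T v = W) (j : Fin r) : v j ∈ W :=
  hW ▸ Submodule.subset_span ⟨[], j, by simp⟩

theorem mapsTo_of_tupleSpan_eq {W : Submodule K V} {T : Fin d → Module.End K V} {v : Fin r → V}
    (hW : tupleSpan K T v = W) (i : Fin d) : ∀ x ∈ W, T i x ∈ W := by
  subst hW
  suffices h : tupleSpan K T v ≤ (tupleSpan K T v).comap (T i) from fun x hx => h hx
  refine Submodule.span_le.2 ?_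
  rintro _ ⟨l, j, rfl⟩
  exact Submodule.subset_span ⟨i :: l, j, by simp⟩

theorem map_tupleSpan (f : V →ₗ[K] V') {T : Fin d → Module.End K V}
    {T' : Fin d → Module.End K V'} (hf : ∀ i, f ∘ₗ T i = T' i ∘ₗ f) (v : Fin r → V) :
    (tupleSpan K T v).map f = tupleSpan K T' (fun j => f (v j)) := by
  have key : ∀ (l : List (Fin d)) x, f ((l.map T).prod x) = (l.map T').prod (f x) := by
    intro l x
    induction l with
    | nil => simp
    | cons i l ih => simpa [ih] using LinearMap.congr_fun (hf i) ((l.map T).prod x)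
  rw [tupleSpan, tupleSpan, Submodule.map_span]
  congr 1
  ext w
  constructor
  · rintro ⟨_, ⟨l, j, rfl⟩, rfl⟩
    exact ⟨l, j, key l _⟩
  · rintro ⟨l, j, rfl⟩
    exact ⟨_, ⟨l, j, rfl⟩, key l _⟩

theorem tupleSpan_conj (e : V ≃ₗ[K] V') (T : Fin d → Module.End K V) (v : Fin r → V) :
    tupleSpan K (fun i => e.toLinearMap ∘ₗ T i ∘ₗ e.symm.toLinearMap) (fun j => e (v j)) =
      (tupleSpan K T v).map (e : V →ₗ[K] V') :=
  (map_tupleSpan _ (fun i => by ext; simp) v).symm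

theorem tupleSpan_restrict_eq_top_iff {W : Submodule K V} {T : Fin d → Module.End K V}
    (hT : ∀ i, ∀ x ∈ W, T i x ∈ W) {v : Fin r → V} (hv : ∀ j, v j ∈ W) :
    tupleSpan K (fun i => (T i).restrict (hT i)) (fun j => ⟨v j, hv j⟩) = ⊤ ↔
      tupleSpan K T v = W := by
  have h := map_tupleSpan W.subtype (fun i => LinearMap.subtype_comp_restrict (hT i))
    (fun j => (⟨v j, hv j⟩ : W))
  rw [← (Submodule.map_injective_of_injective W.injective_subtype).eq_iff, h,
    Submodule.map_subtype_top]
  rfl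

end TupleSpan
def FullSpanTuple (K V : Type*) [Field K] [AddCommGroup V] [Module K V] (d r : ℕ) : Type _ :=
  {x : (Fin d → Module.End K V) × (Fin r → V) // tupleSpan K x.1 x.2 = ⊤}

namespace FullSpanTuple

variable {K V V' : Type*} [Field K] [AddCommGroup V] [Module K V] [AddCommGroup V'] [Module K V']
  {d r : ℕ}

def conj (e : V ≃ₗ[K] V') (x : FullSpanTuple K V d r) : FullSpanTuple K V' d r :=
  ⟨(fun i => e.toLinearMap ∘ₗ x.1.1 i ∘ₗ e.symm.toLinearMap, fun j => e (x.1.2 j)), by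
    rw [tupleSpan_conj, x.2, Submodule.map_top, LinearEquiv.range]⟩

def congr (e : V ≃ₗ[K] V') : FullSpanTuple K V d r ≃ FullSpanTuple K V' d r where
  toFun := conj e
  invFun := conj e.symm
  left_inv x := Subtype.ext <| Prod.ext (funext fun i => by ext; simp [conj]) (by simp [conj])
  right_inv x := Subtype.ext <| Prod.ext (funext fun i => by ext; simp [conj]) (by simp [conj])

instance : MulAction (V ≃ₗ[K] V) (FullSpanTuple K V d r) where
  smul := conj
  one_smul _ := rfl
  mul_smul _ _ _ := rfl

theorem stabilizer_eq_bot (x : FullSpanTuple K V d r) :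
    MulAction.stabilizer (V ≃ₗ[K] V) x = ⊥ := by
  refine (Subgroup.eq_bot_iff_forall _).2 fun g hg => ?_
  have hconj : ∀ i, g.toLinearMap ∘ₗ x.1.1 i ∘ₗ g.symm.toLinearMap = x.1.1 i :=
    fun i => congrFun (congrArg (fun y : FullSpanTuple K V d r => y.1.1) hg) i
  have hv : ∀ j, g (x.1.2 j) = x.1.2 j :=
    fun j => congrFun (congrArg (fun y : FullSpanTuple K V d r => y.1.2) hg) j
  have hcomm : ∀ i z, g (x.1.1 i z) = x.1.1 i (g z) := fun i z => by
    simpa using LinearMap.congr_fun (hconj i) (g z)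
  have hfix : tupleSpan K x.1.1 x.1.2 ≤ LinearMap.eqLocus g.toLinearMap LinearMap.id :=
    tupleSpan_le_of_mapsTo (fun i z hz => (hcomm i z).trans (congrArg _ hz)) hv
  rw [x.2] at hfix
  exact LinearEquiv.ext fun z => hfix Submodule.mem_top

end FullSpanTuple

theorem numOrbits_eq_card_orbitRel_quotient (K : Type*) [Field K] (d r k : ℕ) :
    numOrbits K d r k = Nat.card (MulAction.orbitRel.Quotient ((Fin k → K) ≃ₗ[K] (Fin k → K))
      (FullSpanTuple K (Fin k → K) d r)) := by
  refine Nat.card_congr (Quot.congr (Equiv.refl _)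
    fun (x y : FullSpanTuple K (Fin k → K) d r) => ?_)
  change (∃ g, glAct g x.1 = y.1) ↔ x ∈ MulAction.orbit ((Fin k → K) ≃ₗ[K] (Fin k → K)) y
  rw [MulAction.mem_orbit_symm]
  exact ⟨fun ⟨g, h⟩ => ⟨g, Subtype.ext h⟩, fun ⟨g, h⟩ => ⟨g, congrArg Subtype.val h⟩⟩

theorem numOrbits_mul_cardGL (K : Type*) [Field K] (d r k : ℕ) :
    numOrbits K d r k * cardGL K k = Nat.card (FullSpanTuple K (Fin k → K) d r) := by
  rw [numOrbits_eq_card_orbitRel_quotient, cardGL, ← Nat.card_prod,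
    Nat.card_congr (MulAction.selfEquivOrbitsQuotientProd FullSpanTuple.stabilizer_eq_bot)]

section Complement

variable {K V : Type*} [Field K] [AddCommGroup V] [Module K V] {W C : Submodule K V} {d r : ℕ}

noncomputable def endInvariantEquivOfIsCompl (h : IsCompl W C) :
    {T : Module.End K V // ∀ x ∈ W, T x ∈ W} ≃ Module.End K W × (C →ₗ[K] V) where
  toFun T := (T.1.restrict T.2, T.1 ∘ₗ C.subtype)
  invFun p := ⟨LinearMap.ofIsCompl h (W.subtype ∘ₗ p.1) p.2, fun x hx => by
    rw [show x = ((⟨x, hx⟩ : W) : V) from rfl, LinearMap.ofIsCompl_apply_left]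
    exact (p.1 _).2⟩
  left_inv T := Subtype.ext (LinearMap.ofIsCompl_eq' h rfl rfl)
  right_inv p := Prod.ext (by ext; simp) (by ext; simp)

noncomputable def tupleSpanFiberEquiv (h : IsCompl W C) :
    {x : (Fin d → Module.End K V) × (Fin r → V) // tupleSpan K x.1 x.2 = W} ≃
      FullSpanTuple K W d r × (Fin d → C →ₗ[K] V) where
  toFun x :=
    (⟨(fun i => (x.1.1 i).restrict (mapsTo_of_tupleSpan_eq x.2 i),
        fun j => ⟨x.1.2 j, mem_of_tupleSpan_eq x.2 j⟩),
      (tupleSpan_restrict_eq_top_iff (mapsTo_of_tupleSpan_eq x.2) (mem_of_tupleSpan_eq x.2)).2 x.2⟩,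
     fun i => x.1.1 i ∘ₗ C.subtype)
  invFun y :=
    ⟨(fun i => ((endInvariantEquivOfIsCompl h).symm (y.1.1.1 i, y.2 i)).1,
      fun j => y.1.1.2 j), by
      let S i := (endInvariantEquivOfIsCompl h).symm (y.1.1.1 i, y.2 i)
      have hS : ∀ i, (S i).1.restrict (S i).2 = y.1.1.1 i := fun i =>
        congrArg Prod.fst ((endInvariantEquivOfIsCompl h).apply_symm_apply _)
      refine (tupleSpan_restrict_eq_top_iff (fun i => (S i).2) (fun j => (y.1.1.2 j).2)).1 ?_
      simp only [hS]
      exact y.1.2⟩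
  left_inv x := Subtype.ext <| Prod.ext (funext fun i => congrArg Subtype.val
    ((endInvariantEquivOfIsCompl h).symm_apply_apply ⟨x.1.1 i, mapsTo_of_tupleSpan_eq x.2 i⟩)) rfl
  right_inv y := Prod.ext
    (Subtype.ext <| Prod.ext (funext fun i =>
      congrArg Prod.fst ((endInvariantEquivOfIsCompl h).apply_symm_apply _)) rfl)
    (funext fun i => congrArg Prod.snd ((endInvariantEquivOfIsCompl h).apply_symm_apply _))

end Complement

section Counting

variable {K V : Type*} [Field K] [AddCommGroup V] [Module K V] [FiniteDimensional K V]

theorem card_submodule_finrank_eq_finrank :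
    Nat.card {W : Submodule K V // finrank K W = finrank K V} = 1 := by
  refine Nat.card_eq_one_iff_unique.2 ⟨⟨fun W W' => Subtype.ext ?_⟩, ⟨⊤, finrank_top K V⟩⟩
  rw [Submodule.eq_top_of_finrank_eq W.2, Submodule.eq_top_of_finrank_eq W'.2]

variable [Fintype K] {d r : ℕ}

theorem card_tuples :
    Nat.card ((Fin d → Module.End K V) × (Fin r → V)) =
      Fintype.card K ^ (d * finrank K V ^ 2 + r * finrank K V) := by
  rw [Module.natCard_eq_pow_finrank (K := K), Nat.card_eq_fintype_card (α := K)]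
  simp [finrank_pi_fintype, finrank_linearMap, sq]

theorem card_tupleSpan_eq (W : Submodule K V) :
    Nat.card {x : (Fin d → Module.End K V) × (Fin r → V) // tupleSpan K x.1 x.2 = W} =
      numOrbits K d r (finrank K W) * cardGL K (finrank K W) *
        Fintype.card K ^ (d * finrank K V * (finrank K V - finrank K W)) := by
  obtain ⟨C, hC⟩ := W.exists_isCompl
  have hC' : finrank K C = finrank K V - finrank K W := by
    have := Submodule.finrank_add_eq_of_isCompl hC
    omega
  rw [Nat.card_congr (tupleSpanFiberEquiv hC), Nat.card_prod, numOrbits_mul_cardGL,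
    Nat.card_congr (FullSpanTuple.congr (Module.finBasis K W).equivFun),
    Module.natCard_eq_pow_finrank (K := K) (V := Fin d → C →ₗ[K] V),
    Nat.card_eq_fintype_card (α := K)]
  congr 2
  simp only [finrank_pi_fintype, finrank_linearMap, hC', Finset.sum_const, Finset.card_univ,
    Fintype.card_fin, smul_eq_mul]
  ring

theorem card_tuples_eq_sum :
    Nat.card ((Fin d → Module.End K V) × (Fin r → V)) =
      ∑ k ∈ Finset.range (finrank K V + 1),
        numOrbits K d r k * cardGL K k * Nat.card {W : Submodule K V // finrank K W = k} *
          Fintype.card K ^ (d * finrank K V * (finrank K V - k)) := by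
  classical
  have : Finite V := Module.finite_of_finite K
  have : Finite (Module.End K V) := Module.finite_of_finite K
  have := Fintype.ofFinite (Submodule K V)
  rw [← Nat.card_congr (Equiv.sigmaFiberEquiv fun x : (Fin d → Module.End K V) × (Fin r → V) =>
    tupleSpan K x.1 x.2), Nat.card_sigma]
  simp_rw [card_tupleSpan_eq]
  refine (Finset.sum_fiberwise_of_maps_to' (g := fun W : Submodule K V => finrank K W)
    (t := Finset.range (finrank K V + 1))
    (fun W _ => Finset.mem_range_succ_iff.2 (Submodule.finrank_le W))
    (fun k => numOrbits K d r k * cardGL K k *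
      Fintype.card K ^ (d * finrank K V * (finrank K V - k)))).symm.trans
    (Finset.sum_congr rfl fun k _ => ?_)
  rw [Finset.sum_const, smul_eq_mul, Nat.card_eq_fintype_card, Fintype.card_subtype]
  ring

end Counting

theorem stmt_8_general {K : Type*} [Field K] [Fintype K] {q d r n : ℕ}
    (hq : Fintype.card K = q) :
    (numOrbits K d r n * cardGL K n : ℤ) =
      (q : ℤ) ^ (d * n ^ 2 + r * n) -
        ∑ k ∈ Finset.range n,
          (numOrbits K d r k : ℤ) * cardGL K k *
            Nat.card {Λ : Submodule K (Fin n → K) // Module.finrank K Λ = k} *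
            (q : ℤ) ^ (d * n * (n - k)) := by
  subst hq
  have h := card_tuples_eq_sum (K := K) (V := Fin n → K) (d := d) (r := r)
  rw [card_tuples, Finset.sum_range_succ, card_submodule_finrank_eq_finrank, Nat.sub_self,
    Module.finrank_fin_fun] at h
  have h' := congrArg (Nat.cast : ℕ → ℤ) h
  push_cast at h'
  linear_combination -h'

/-- Point-count version of the main recursion:
`N_n·|GL_n(K)| = q^(dn²+rn) − Σ_{k=0}^{n-1} N_k·|GL_k(K)|·c_q(k,n)·q^(d·n·(n−k))`. -/
theorem stmt_8 {K : Type*} [Field K] [Fintype K] {q d r n : ℕ}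
    (hq : Fintype.card K = q) (hd : 1 ≤ d) (hr : 1 ≤ r) :
    (numOrbits K d r n * cardGL K n : ℤ) =
      (q : ℤ) ^ (d * n ^ 2 + r * n) -
        ∑ k ∈ Finset.range n,
          (numOrbits K d r k : ℤ) * cardGL K k *
            Nat.card {Λ : Submodule K (Fin n → K) // Module.finrank K Λ = k} *
            (q : ℤ) ^ (d * n * (n - k)) :=
  stmt_8_general hq
end

section
/- (Rearranged form of the main recursion.) Let K be a finite field with q elements and fix integers d, r ≥ 1 and n ≥ 0. Let N_k denote the number of GL_k(K)-orbits on the set U^k_{r,d}(K) of full-span tuples on K^k. Then q^{d n² + r n} = Σ_{k=0}^{n} N_k · |GL_k(K)| · c_q(k,n) · q^{d·n·(n−k)}, where c_q(k,n) is the number of k-dimensional K-subspaces of K^n. -/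
section aux
variable {K : Type*} [Field K] {d r : ℕ}
variable {V V' : Type*} [AddCommGroup V] [Module K V] [AddCommGroup V'] [Module K V']

lemma listProd_comm (f : V' →ₗ[K] V) (A : Fin d → Module.End K V') (T : Fin d → Module.End K V)
    (h : ∀ i, f ∘ₗ A i = T i ∘ₗ f) (l : List (Fin d)) (w : V') :
    f ((l.map A).prod w) = (l.map T).prod (f w) := by
  induction l with
  | nil => simp
  | cons i l ih =>
    simp only [List.map_cons, List.prod_cons, Module.End.mul_apply]
    rw [show f ((A i) ((List.map A l).prod w)) = (f ∘ₗ A i) ((List.map A l).prod w) from rfl,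
      h i]
    simp only [LinearMap.comp_apply, ih]

lemma tupleSpan_map (f : V' →ₗ[K] V) (A : Fin d → Module.End K V') (T : Fin d → Module.End K V)
    (h : ∀ i, f ∘ₗ A i = T i ∘ₗ f) (v' : Fin r → V') :
    Submodule.map f (tupleSpan K A v') = tupleSpan K T (fun j => f (v' j)) := by
  rw [tupleSpan, tupleSpan, Submodule.map_span]
  congr 1
  ext w
  constructor
  · rintro ⟨_, ⟨l, j, rfl⟩, rfl⟩
    exact ⟨l, j, listProd_comm f A T h l (v' j)⟩
  · rintro ⟨l, j, rfl⟩
    exact ⟨_, ⟨l, j, rfl⟩, listProd_comm f A T h l (v' j)⟩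

lemma mem_tupleSpan_self (T : Fin d → Module.End K V) (v : Fin r → V) (j : Fin r) :
    v j ∈ tupleSpan K T v :=
  Submodule.subset_span ⟨[], j, by simp⟩

lemma tupleSpan_invariant (T : Fin d → Module.End K V) (v : Fin r → V) (i : Fin d) :
    ∀ x ∈ tupleSpan K T v, T i x ∈ tupleSpan K T v := by
  intro x hx
  induction hx using Submodule.span_induction with
  | mem x hx =>
    obtain ⟨l, j, rfl⟩ := hx
    exact Submodule.subset_span ⟨i :: l, j, by simp [List.prod_cons]⟩
  | zero => simp
  | add x y _ _ hx hy => rw [map_add]; exact add_mem hx hy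
  | smul c x _ hx => rw [map_smul]; exact Submodule.smul_mem _ _ hx

end aux

section orbits
variable {K : Type*} [Field K] {d r k : ℕ}

lemma glAct_refl (x : (Fin d → Module.End K (Fin k → K)) × (Fin r → (Fin k → K))) :
    glAct (LinearEquiv.refl K (Fin k → K)) x = x := by
  unfold glAct
  refine Prod.ext (funext fun i => ?_) (funext fun j => rfl)
  ext w
  simp

lemma glAct_comp (g h : (Fin k → K) ≃ₗ[K] (Fin k → K))
    (x : (Fin d → Module.End K (Fin k → K)) × (Fin r → (Fin k → K))) :
    glAct g (glAct h x) = glAct (h.trans g) x := by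
  unfold glAct
  refine Prod.ext (funext fun i => ?_) (funext fun j => rfl)
  ext w
  simp

lemma glAct_tupleSpan (g : (Fin k → K) ≃ₗ[K] (Fin k → K))
    (x : (Fin d → Module.End K (Fin k → K)) × (Fin r → (Fin k → K))) :
    tupleSpan K (glAct g x).1 (glAct g x).2
      = Submodule.map g.toLinearMap (tupleSpan K x.1 x.2) := by
  refine (tupleSpan_map g.toLinearMap x.1 (glAct g x).1 (fun i => ?_) x.2).symm
  ext w
  simp [glAct]

lemma glAct_top (g : (Fin k → K) ≃ₗ[K] (Fin k → K))
    (x : (Fin d → Module.End K (Fin k → K)) × (Fin r → (Fin k → K)))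
    (hx : tupleSpan K x.1 x.2 = ⊤) :
    tupleSpan K (glAct g x).1 (glAct g x).2 = ⊤ := by
  rw [glAct_tupleSpan, hx, Submodule.map_top, LinearEquiv.range]

lemma glAct_free (x : (Fin d → Module.End K (Fin k → K)) × (Fin r → (Fin k → K)))
    (hx : tupleSpan K x.1 x.2 = ⊤) (g : (Fin k → K) ≃ₗ[K] (Fin k → K))
    (hg : glAct g x = x) : g = LinearEquiv.refl K (Fin k → K) := by
  have hT : ∀ i w, g (x.1 i w) = x.1 i (g w) := by
    intro i w
    have h1 := congrFun (congrArg Prod.fst hg) i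
    have h2 := congrArg (fun f : Module.End K (Fin k → K) => f (g w)) h1
    simp only [glAct, LinearMap.comp_apply, LinearEquiv.coe_coe,
      LinearEquiv.symm_apply_apply] at h2
    exact h2
  have hv : ∀ j, g (x.2 j) = x.2 j := fun j => congrFun (congrArg Prod.snd hg) j
  have key : ∀ w, w ∈ tupleSpan K x.1 x.2 → g w = w := by
    intro w hw
    induction hw using Submodule.span_induction with
    | mem w hw =>
      obtain ⟨l, j, rfl⟩ := hw
      induction l with
      | nil => simpa using hv j
      | cons i l ih =>
        simp only [List.map_cons, List.prod_cons, Module.End.mul_apply]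
        rw [hT i, ih]
    | zero => simp
    | add a b _ _ ha hb => rw [map_add, ha, hb]
    | smul c a _ ha => rw [map_smul, ha]
  exact LinearEquiv.ext fun w => key w (hx ▸ Submodule.mem_top)

lemma card_fullTup (k : ℕ) :
    Nat.card {x : (Fin d → Module.End K (Fin k → K)) ×
        (Fin r → (Fin k → K)) // tupleSpan K x.1 x.2 = ⊤} = numOrbits K d r k * cardGL K k := by
  classical
  set α := {x : (Fin d → Module.End K (Fin k → K)) ×
      (Fin r → (Fin k → K)) // tupleSpan K x.1 x.2 = ⊤} with hα
  let rel : α → α → Prop := fun x y => ∃ g : (Fin k → K) ≃ₗ[K] (Fin k → K), glAct g x.1 = y.1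
  letI s : Setoid α := ⟨rel, ⟨fun x => ⟨LinearEquiv.refl K _, glAct_refl x.1⟩,
    fun {x y} ⟨g, hg⟩ => ⟨g.symm, by
      rw [← hg, glAct_comp, LinearEquiv.self_trans_symm, glAct_refl]⟩,
    fun {x y z} ⟨g, hg⟩ ⟨g', hg'⟩ => ⟨g.trans g', by rw [← hg', ← hg, glAct_comp]⟩⟩⟩
  have horb : numOrbits K d r k = Nat.card (Quotient s) := rfl
  let F : Quotient s × ((Fin k → K) ≃ₗ[K] (Fin k → K)) → α :=
    fun p => ⟨glAct p.2 p.1.out.1, glAct_top _ _ p.1.out.2⟩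
  have hbij : Function.Bijective F := by
    constructor
    · rintro ⟨o₁, g₁⟩ ⟨o₂, g₂⟩ h
      have h1 : glAct g₁ o₁.out.1 = glAct g₂ o₂.out.1 := congrArg Subtype.val h
      have hrel : rel o₁.out o₂.out := by
        refine ⟨g₁.trans g₂.symm, ?_⟩
        rw [← glAct_comp, h1, glAct_comp, LinearEquiv.self_trans_symm, glAct_refl]
      have ho : o₁ = o₂ := by
        rw [← Quotient.out_eq o₁, ← Quotient.out_eq o₂]
        exact Quotient.sound hrel
      subst ho
      have hfix : glAct (g₁.trans g₂.symm) o₁.out.1 = o₁.out.1 := by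
        rw [← glAct_comp, h1, glAct_comp, LinearEquiv.self_trans_symm, glAct_refl]
      have := glAct_free o₁.out.1 o₁.out.2 _ hfix
      have hgg : g₁ = g₂ := by
        refine LinearEquiv.ext fun w => ?_
        have h3 := congrArg (fun e : (Fin k → K) ≃ₗ[K] (Fin k → K) => e w) this
        simp only [LinearEquiv.trans_apply, LinearEquiv.refl_apply] at h3
        have h4 := congrArg g₂ h3
        simpa using h4
      rw [hgg]
    · intro x
      have hx : (Quotient.mk s x).out ≈ x := Quotient.exact (Quotient.out_eq _)
      obtain ⟨g, hg⟩ := hx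
      exact ⟨(Quotient.mk s x, g), Subtype.ext hg⟩
  rw [horb, cardGL, ← Nat.card_prod]
  exact (Nat.card_congr (Equiv.ofBijective F hbij)).symm

end orbits

section fiber
variable {K : Type*} [Field K] {d r : ℕ}
variable {V : Type*} [AddCommGroup V] [Module K V]

lemma mem_of_span_eq {T : Fin d → Module.End K V} {v : Fin r → V} {W : Submodule K V}
    (h : tupleSpan K T v = W) (j : Fin r) : v j ∈ W := h ▸ mem_tupleSpan_self T v j

lemma inv_of_span_eq {T : Fin d → Module.End K V} {v : Fin r → V} {W : Submodule K V}
    (h : tupleSpan K T v = W) (i : Fin d) : ∀ z ∈ W, T i z ∈ W := by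
  subst h; exact tupleSpan_invariant T v i

def conjTup {V' : Type*} [AddCommGroup V'] [Module K V'] (φ : V ≃ₗ[K] V')
    (x : (Fin d → Module.End K V) × (Fin r → V)) :
    (Fin d → Module.End K V') × (Fin r → V') :=
  (fun i => φ.toLinearMap ∘ₗ x.1 i ∘ₗ φ.symm.toLinearMap, fun j => φ (x.2 j))

lemma conjTup_span {V' : Type*} [AddCommGroup V'] [Module K V'] (φ : V ≃ₗ[K] V')
    (x : (Fin d → Module.End K V) × (Fin r → V)) :
    tupleSpan K (conjTup φ x).1 (conjTup φ x).2
      = Submodule.map φ.toLinearMap (tupleSpan K x.1 x.2) := by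
  refine (tupleSpan_map φ.toLinearMap x.1 (conjTup φ x).1 (fun i => ?_) x.2).symm
  ext w
  simp [conjTup]

def fullTupCongr {V' : Type*} [AddCommGroup V'] [Module K V'] (φ : V ≃ₗ[K] V') :
    {x : (Fin d → Module.End K V) × (Fin r → V) // tupleSpan K x.1 x.2 = ⊤} ≃
    {x : (Fin d → Module.End K V') × (Fin r → V') // tupleSpan K x.1 x.2 = ⊤} where
  toFun x := ⟨conjTup φ x.1, by rw [conjTup_span, x.2, Submodule.map_top, LinearEquiv.range]⟩
  invFun y := ⟨conjTup φ.symm y.1, by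
    rw [conjTup_span, y.2, Submodule.map_top, LinearEquiv.range]⟩
  left_inv x := by
    refine Subtype.ext (Prod.ext (funext fun i => ?_) (funext fun j => by simp [conjTup]))
    ext w
    simp [conjTup]
  right_inv y := by
    refine Subtype.ext (Prod.ext (funext fun i => ?_) (funext fun j => by simp [conjTup]))
    ext w
    simp [conjTup]

variable (W C : Submodule K V) (hC : IsCompl W C)

noncomputable def recombine (A : Module.End K W) (B : C →ₗ[K] V) : Module.End K V :=
  ((W.subtype ∘ₗ A).coprod B) ∘ₗ (Submodule.prodEquivOfIsCompl W C hC).symm.toLinearMap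

lemma recombine_apply_left (A : Module.End K W) (B : C →ₗ[K] V) (w : W) :
    recombine W C hC A B ↑w = ↑(A w) := by
  simp [recombine, Submodule.prodEquivOfIsCompl_symm_apply_left]

lemma recombine_apply_right (A : Module.End K W) (B : C →ₗ[K] V) (c : C) :
    recombine W C hC A B ↑c = B c := by
  simp [recombine, Submodule.prodEquivOfIsCompl_symm_apply_right]

lemma recombine_subtype_comp (A : Module.End K W) (B : C →ₗ[K] V) :
    W.subtype ∘ₗ A = recombine W C hC A B ∘ₗ W.subtype := by
  ext w
  simp [recombine_apply_left]

noncomputable def fiberEquiv :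
    {x : (Fin d → Module.End K V) × (Fin r → V) // tupleSpan K x.1 x.2 = W} ≃
    ({y : (Fin d → Module.End K W) × (Fin r → W) // tupleSpan K y.1 y.2 = ⊤} ×
      (Fin d → (C →ₗ[K] V))) where
  toFun x := ⟨⟨(fun i => (x.1.1 i).restrict (inv_of_span_eq x.2 i),
      fun j => ⟨x.1.2 j, mem_of_span_eq x.2 j⟩), by
        apply Submodule.map_injective_of_injective (Submodule.injective_subtype W)
        rw [tupleSpan_map W.subtype _ x.1.1
          (fun i => by ext z; simp [LinearMap.restrict_coe_apply]) _,
          Submodule.map_top, Submodule.range_subtype]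
        exact x.2⟩,
    fun i => x.1.1 i ∘ₗ C.subtype⟩
  invFun p := ⟨(fun i => recombine W C hC (p.1.1.1 i) (p.2 i), fun j => ↑(p.1.1.2 j)), by
    have h := tupleSpan_map W.subtype p.1.1.1 _
      (fun i => recombine_subtype_comp W C hC (p.1.1.1 i) (p.2 i)) p.1.1.2
    rw [p.1.2, Submodule.map_top, Submodule.range_subtype] at h
    exact h.symm⟩
  left_inv x := by
    refine Subtype.ext (Prod.ext (funext fun i => ?_) (funext fun j => rfl))
    apply LinearMap.ext
    intro z
    obtain ⟨⟨w, c⟩, rfl⟩ := (Submodule.prodEquivOfIsCompl W C hC).surjective z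
    rw [Submodule.coe_prodEquivOfIsCompl']
    simp [recombine_apply_left, recombine_apply_right, LinearMap.restrict_coe_apply]
  right_inv p := by
    refine Prod.ext (Subtype.ext (Prod.ext (funext fun i => ?_) (funext fun j => Subtype.ext rfl)))
      (funext fun i => ?_)
    · refine LinearMap.ext fun w => Subtype.ext ?_
      rw [LinearMap.restrict_coe_apply]
      exact recombine_apply_left W C hC _ _ w
    · refine LinearMap.ext fun c => ?_
      exact recombine_apply_right W C hC _ _ c

end fiber

section counting
variable {K : Type*} [Field K] [Fintype K] {d r : ℕ}

lemma card_module' {M : Type*} [AddCommGroup M] [Module K M] [Finite M] :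
    Nat.card M = Fintype.card K ^ Module.finrank K M := by
  have := Fintype.ofFinite M
  rw [Nat.card_eq_fintype_card]
  exact Module.card_eq_pow_finrank

lemma card_linearMap' {M N : Type*} [AddCommGroup M] [Module K M] [AddCommGroup N] [Module K N]
    [Finite M] [Finite N] :
    Nat.card (M →ₗ[K] N) = Fintype.card K ^ (Module.finrank K M * Module.finrank K N) := by
  haveI : Module.Finite K M := Module.Finite.of_finite
  haveI : Module.Finite K N := Module.Finite.of_finite
  haveI : Finite (M →ₗ[K] N) :=
    Finite.of_injective (fun f => (f : M → N)) DFunLike.coe_injective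
  rw [card_module' (K := K), Module.finrank_linearMap]

lemma card_fiber {n : ℕ} (W : Submodule K (Fin n → K)) :
    Nat.card {x : (Fin d → Module.End K (Fin n → K)) × (Fin r → (Fin n → K)) //
        tupleSpan K x.1 x.2 = W} =
      numOrbits K d r (Module.finrank K W) * cardGL K (Module.finrank K W) *
        (Fintype.card K) ^ (d * n * (n - Module.finrank K W)) := by
  classical
  obtain ⟨C, hC⟩ := Submodule.exists_isCompl W
  set k := Module.finrank K W with hk
  let b := Module.finBasisOfFinrankEq K W hk.symm
  let φ : W ≃ₗ[K] (Fin k → K) := b.equivFun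
  have e : {x : (Fin d → Module.End K (Fin n → K)) × (Fin r → (Fin n → K)) //
        tupleSpan K x.1 x.2 = W} ≃
      ({y : (Fin d → Module.End K (Fin k → K)) × (Fin r → (Fin k → K)) //
        tupleSpan K y.1 y.2 = ⊤} × (Fin d → (C →ₗ[K] (Fin n → K)))) :=
    (fiberEquiv W C hC).trans (Equiv.prodCongr (fullTupCongr φ) (Equiv.refl _))
  rw [Nat.card_congr e, Nat.card_prod, card_fullTup]
  congr 1
  have hfC : Module.finrank K C = n - k := by
    have h1 := Submodule.finrank_add_eq_of_isCompl hC
    rw [Module.finrank_fin_fun] at h1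
    omega
  rw [Nat.card_fun, card_linearMap', hfC, Module.finrank_fin_fun,
    Nat.card_eq_fintype_card, Fintype.card_fin, ← pow_mul]
  congr 1
  ring

end counting

/-- Rearranged form of the main recursion:
`q^(dn²+rn) = Σ_{k=0}^{n} N_k·|GL_k(K)|·c_q(k,n)·q^(d·n·(n−k))`. -/
theorem stmt_9 {K : Type*} [Field K] [Fintype K] {q d r n : ℕ}
    (hq : Fintype.card K = q) (hd : 1 ≤ d) (hr : 1 ≤ r) :
    q ^ (d * n ^ 2 + r * n) =
      ∑ k ∈ Finset.range (n + 1),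
        numOrbits K d r k * cardGL K k *
          Nat.card {Λ : Submodule K (Fin n → K) // Module.finrank K Λ = k} *
          q ^ (d * n * (n - k)) := by
  classical
  subst hq
  haveI : Finite (Submodule K (Fin n → K)) :=
    Finite.of_injective (fun W => (W : Set (Fin n → K))) SetLike.coe_injective
  letI := Fintype.ofFinite (Submodule K (Fin n → K))
  set X := (Fin d → Module.End K (Fin n → K)) × (Fin r → (Fin n → K)) with hX
  haveI : Finite (Module.End K (Fin n → K)) :=
    Finite.of_injective (fun f => (f : (Fin n → K) → (Fin n → K))) DFunLike.coe_injective
  haveI : Finite X := by rw [hX]; infer_instance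
  letI : ∀ W : Submodule K (Fin n → K),
      Fintype {x : X // tupleSpan K x.1 x.2 = W} := fun W => Fintype.ofFinite _
  -- total count
  have hcardX : Nat.card X = Fintype.card K ^ (d * n ^ 2 + r * n) := by
    rw [hX, Nat.card_prod, Nat.card_fun, Nat.card_fun, card_linearMap' (K := K),
      card_module' (K := K) (M := Fin n → K), Module.finrank_fin_fun,
      Nat.card_eq_fintype_card (α := Fin d), Nat.card_eq_fintype_card (α := Fin r),
      Fintype.card_fin, Fintype.card_fin, ← pow_mul, ← pow_mul, ← pow_add]
    congr 1
    ring
  -- decomposition by span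
  have hdecomp : Nat.card X =
      ∑ W : Submodule K (Fin n → K), Nat.card {x : X // tupleSpan K x.1 x.2 = W} := by
    rw [← Nat.card_congr (Equiv.sigmaFiberEquiv (fun x : X => tupleSpan K x.1 x.2)),
      Nat.card_eq_fintype_card, Fintype.card_sigma]
    simp [Nat.card_eq_fintype_card]
  rw [← hcardX, hdecomp]
  have hmap : ∀ W : Submodule K (Fin n → K), W ∈ Finset.univ →
      Module.finrank K W ∈ Finset.range (n + 1) := by
    intro W _
    rw [Finset.mem_range]
    have := Submodule.finrank_le W
    rw [Module.finrank_fin_fun] at this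
    omega
  rw [← Finset.sum_fiberwise_of_maps_to hmap
    (fun W => Nat.card {x : X // tupleSpan K x.1 x.2 = W})]
  refine Finset.sum_congr rfl fun k hk => ?_
  have hconst : ∀ W ∈ Finset.univ.filter (fun W : Submodule K (Fin n → K) =>
      Module.finrank K W = k),
      Nat.card {x : X // tupleSpan K x.1 x.2 = W} =
        numOrbits K d r k * cardGL K k * Fintype.card K ^ (d * n * (n - k)) := by
    intro W hW
    rw [Finset.mem_filter] at hW
    rw [card_fiber, hW.2]
  rw [Finset.sum_congr rfl hconst, Finset.sum_const, smul_eq_mul]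
  have hcard : (Finset.univ.filter (fun W : Submodule K (Fin n → K) =>
      Module.finrank K W = k)).card =
      Nat.card {Λ : Submodule K (Fin n → K) // Module.finrank K Λ = k} := by
    rw [Nat.card_eq_fintype_card, Fintype.card_subtype]
  rw [hcard]
  ring
end
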